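/- arXiv:1610.01029 — 3 statements merged into one kernel-verified Lean document; each statement's English description precedes it below -/
import Mathlib

section
/- If the wavefunction Ψ satisfies the linear spectral problem D_jΨ = U_jΨ (j = 1,2), and the deformed quantities Ũ_j = U_j + εA_j, Ψ̃ = Ψ(I + εF) with bosonic infinitesimal parameter ε (ε² = 0) satisfy D_jΨ̃ = Ũ_jΨ̃, then the tangent vectors of the surface F are given by E·D_j(F) = Ψ⁻¹ E A_j Ψ, where E = diag(I_p, −I_q). -/
noncomputable section

/-- Lift of an operator d on R to the dual numbers R[ε] (ε² = 0, ε central and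
bosonic), acting componentwise. -/
def liftD {R : Type*} [Ring R] (d : R → R) (x : DualNumber R) : DualNumber R :=
  TrivSqZeroExt.inl (d (TrivSqZeroExt.fst x)) + TrivSqZeroExt.inr (d (TrivSqZeroExt.snd x))

/-- The infinitesimally deformed wavefunction Ψ̃ = Ψ(I + εF) in R[ε]. -/
def deformedWave {R : Type*} [Ring R] (Ψ F : R) : DualNumber R :=
  TrivSqZeroExt.inl Ψ * (1 + DualNumber.eps * TrivSqZeroExt.inl F)

/-- The infinitesimally deformed potential Ũ_j = U_j + εA_j in R[ε]. -/
def deformedPotential {R : Type*} [Ring R] (U A : R) : DualNumber R :=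
  TrivSqZeroExt.inl U + DualNumber.eps * TrivSqZeroExt.inl A

/-- In the algebra R of supermatrix-valued superfunctions, with
odd derivations D_j obeying the graded Leibniz rule D_j(MN) = (D_jM)N + α(M)(D_jN)
(α the grade involution, realized on even supermatrices by conjugation with
E = diag(I_p, −I_q)), suppose Ψ is invertible and solves the linear spectral
problem D_jΨ = U_jΨ.  If the bosonic infinitesimal deformations
Ũ_j = U_j + εA_j, Ψ̃ = Ψ(I + εF) (with ε² = 0, ε central and bosonic) satisfy
the deformed linear spectral problem D_jΨ̃ = Ũ_jΨ̃, then the tangent vectors of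
the surface F are E·D_j(F) = Ψ⁻¹ E A_j Ψ. -/
theorem susy_bosonic_immersion_tangent
    {R : Type*} [Ring R]
    (D : Fin 2 → R → R) (α : R →+* R)
    (E Ψ Ψinv F : R) (U A : Fin 2 → R)
    (hDadd : ∀ j x y, D j (x + y) = D j x + D j y)
    (hLeib : ∀ (j : Fin 2) (M N : R), D j (M * N) = D j M * N + α M * D j N)
    (hE : E * E = 1)
    (hΨl : Ψinv * Ψ = 1) (hΨr : Ψ * Ψinv = 1)
    (hαΨ : α Ψ = E * Ψ * E)           -- Ψ is an even supermatrix
    (hαF : α F = E * F * E)           -- F is an even supermatrix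
    (hLSP : ∀ j, D j Ψ = U j * Ψ)
    (hdef : ∀ j, liftD (D j) (deformedWave Ψ F)
      = deformedPotential (U j) (A j) * deformedWave Ψ F) :
    ∀ j, E * D j F = Ψinv * E * A j * Ψ := by
  intro j
  have h := congrArg TrivSqZeroExt.snd (hdef j)
  simp only [liftD, deformedWave, deformedPotential, TrivSqZeroExt.snd_add,
    TrivSqZeroExt.snd_inl, TrivSqZeroExt.snd_inr, TrivSqZeroExt.snd_mul,
    TrivSqZeroExt.fst_inl, TrivSqZeroExt.fst_add, TrivSqZeroExt.fst_mul,
    TrivSqZeroExt.fst_one, TrivSqZeroExt.snd_one, DualNumber.fst_eps,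
    DualNumber.snd_eps, smul_eq_mul, MulOpposite.smul_eq_mul_unop,
    MulOpposite.unop_op, MulOpposite.op_one, mul_zero, zero_mul, one_mul,
    mul_one, add_zero, zero_add, smul_zero] at h
  -- h : D j (Ψ * F) = U j * (Ψ * F) + A j * Ψ
  rw [hLeib, hLSP, hαΨ] at h
  -- h : U j * Ψ * F + E * Ψ * E * D j F = U j * (Ψ * F) + A j * Ψ
  have h2 : E * Ψ * E * D j F = A j * Ψ := by
    have := h
    rw [← mul_assoc] at this
    exact add_left_cancel this
  have h3 : Ψ * (E * D j F) = E * A j * Ψ := by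
    calc Ψ * (E * D j F) = E * E * Ψ * (E * D j F) := by rw [hE, one_mul]
      _ = E * (E * Ψ * E * D j F) := by noncomm_ring
      _ = E * (A j * Ψ) := by rw [h2]
      _ = E * A j * Ψ := by rw [mul_assoc]
  calc E * D j F = Ψinv * (Ψ * (E * D j F)) := by rw [← mul_assoc, hΨl, one_mul]
    _ = Ψinv * (E * A j * Ψ) := by rw [h3]
    _ = Ψinv * E * A j * Ψ := by simp [mul_assoc]
end
end

section
/- The compatibility condition of the tangent vectors E·D_j(F) = Ψ⁻¹EA_jΨ under D_1, D_2 (where Ψ solves D_jΨ = U_jΨ with zero-curvature condition D_1U_2 + D_2U_1 − {EU_1, EU_2} = 0) is equivalent to the infinitesimally deformed zero-curvature condition D_1A_2 + D_2A_1 − {EA_1, EU_2} − {EA_2, EU_1} = 0. -/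
/-- In the algebra R of supermatrix-valued superfunctions, with odd
derivations D_j obeying the graded Leibniz rule via the grade involution α
(α M = E M E for even M, α M = −E M E for odd M, E = diag(I_p,−I_q)), and
{D_1, D_2} = 0, suppose Ψ is invertible, even, and solves D_jΨ = U_jΨ whose
zero-curvature condition D_1U_2 + D_2U_1 − {EU_1, EU_2} = 0 holds.  Then the
compatibility condition of the tangent vectors D_jF = E·Ψ⁻¹EA_jΨ (i.e.
E·D_j(F) = Ψ⁻¹EA_jΨ), namely D_1(D_2F) + D_2(D_1F) = 0, is equivalent to the
infinitesimally deformed zero-curvature condition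
D_1A_2 + D_2A_1 − {EA_1, EU_2} − {EA_2, EU_1} = 0. -/
theorem susy_bosonic_compatibility_iff_deformed_ZCC
    {R : Type*} [Ring R]
    (D : Fin 2 → R → R) (α : R →+* R)
    (E Ψ Ψinv : R) (U A : Fin 2 → R)
    (hDadd : ∀ j x y, D j (x + y) = D j x + D j y)
    (hLeib : ∀ (j : Fin 2) (M N : R), D j (M * N) = D j M * N + α M * D j N)
    (hanti : ∀ r, D 0 (D 1 r) + D 1 (D 0 r) = 0)
    (hE : E * E = 1) (hαE : α E = E) (hDE : ∀ j, D j E = 0)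
    (hΨl : Ψinv * Ψ = 1) (hΨr : Ψ * Ψinv = 1)
    (hαΨ : α Ψ = E * Ψ * E)                      -- Ψ is even
    (hαU : ∀ j, α (U j) = -(E * U j * E))        -- the U_j are odd
    (hαA : ∀ j, α (A j) = -(E * A j * E))        -- the A_j are odd
    (hLSP : ∀ j, D j Ψ = U j * Ψ)
    (hZCC : D 0 (U 1) + D 1 (U 0)
      - ((E * U 0) * (E * U 1) + (E * U 1) * (E * U 0)) = 0) :
    (D 0 (E * (Ψinv * (E * A 1 * Ψ))) + D 1 (E * (Ψinv * (E * A 0 * Ψ))) = 0)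
    ↔ D 0 (A 1) + D 1 (A 0)
        - ((E * A 0) * (E * U 1) + (E * U 1) * (E * A 0))
        - ((E * A 1) * (E * U 0) + (E * U 0) * (E * A 1)) = 0 := by
  have hE2 : ∀ x : R, E * (E * x) = x := by
    intro x; rw [← mul_assoc, hE, one_mul]
  have hD1 : ∀ j, D j (1 : R) = 0 := by
    intro j
    have h := hLeib j 1 1
    simp only [one_mul, mul_one, map_one] at h
    nth_rewrite 1 [← add_zero (D j 1)] at h
    exact (add_left_cancel h).symm
  have hαΨinv : α Ψinv = E * Ψinv * E := by
    have h1 : α Ψinv * α Ψ = 1 := by rw [← map_mul, hΨl, map_one]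
    have h2 : α Ψ * (E * Ψinv * E) = 1 := by
      rw [hαΨ]
      calc E * Ψ * E * (E * Ψinv * E) = E * (Ψ * Ψinv) * E := by
            simp only [mul_assoc, hE2]
        _ = 1 := by rw [hΨr, mul_one, hE]
    calc α Ψinv = α Ψinv * (α Ψ * (E * Ψinv * E)) := by rw [h2, mul_one]
      _ = (α Ψinv * α Ψ) * (E * Ψinv * E) :=
            (mul_assoc (α Ψinv) (α Ψ) (E * Ψinv * E)).symm
      _ = E * Ψinv * E := by rw [h1, one_mul]
  have hDΨinv : ∀ k, D k Ψinv = -(E * Ψinv * E * U k) := by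
    intro k
    have h : D k Ψinv * Ψ + α Ψinv * (U k * Ψ) = 0 := by
      rw [← hLSP, ← hLeib, hΨl, hD1]
    have h2 : (D k Ψinv + α Ψinv * U k) * Ψ = 0 := by
      rw [add_mul, mul_assoc]; exact h
    have h3 : D k Ψinv + α Ψinv * U k = 0 := by
      calc D k Ψinv + α Ψinv * U k
          = ((D k Ψinv + α Ψinv * U k) * Ψ) * Ψinv := by
            rw [mul_assoc, hΨr, mul_one]
        _ = 0 := by rw [h2, zero_mul]
    rw [hαΨinv] at h3
    exact eq_neg_of_add_eq_zero_left h3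
  have key : ∀ (k j : Fin 2), D k (E * (Ψinv * (E * A j * Ψ)))
      = Ψinv * (D k (A j)
          - ((E * U k) * (E * A j) + (E * A j) * (E * U k))) * Ψ := by
    intro k j
    rw [hLeib k E, hDE, zero_mul, zero_add, hαE,
        hLeib k Ψinv, hDΨinv,
        hLeib k (E * A j) Ψ,
        hLeib k E (A j), hDE, zero_mul, zero_add, hαE,
        map_mul, hαE, hαA, hLSP, hαΨinv]
    simp only [mul_add, add_mul, mul_sub, sub_mul, neg_mul, mul_neg,
      mul_assoc, hE2]
    abel
  have hsum : D 0 (E * (Ψinv * (E * A 1 * Ψ))) + D 1 (E * (Ψinv * (E * A 0 * Ψ)))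
      = Ψinv * ((D 0 (A 1) + D 1 (A 0)
          - ((E * A 0) * (E * U 1) + (E * U 1) * (E * A 0))
          - ((E * A 1) * (E * U 0) + (E * U 0) * (E * A 1)))) * Ψ := by
    rw [key 0 1, key 1 0]
    simp only [mul_add, add_mul, mul_sub, sub_mul]
    abel
  rw [hsum]
  constructor
  · intro h
    set Q := D 0 (A 1) + D 1 (A 0)
          - ((E * A 0) * (E * U 1) + (E * U 1) * (E * A 0))
          - ((E * A 1) * (E * U 0) + (E * U 0) * (E * A 1)) with hQ
    calc Q = Ψ * (Ψinv * Q * Ψ) * Ψinv := by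
          rw [show Ψ * (Ψinv * Q * Ψ) * Ψinv = (Ψ * Ψinv) * Q * (Ψ * Ψinv) by
            simp only [mul_assoc], hΨr, one_mul, mul_one]
      _ = 0 := by rw [h, mul_zero, zero_mul]
  · intro h; rw [h, mul_zero, zero_mul]
end

section
/- For the Sym–Tafel immersion of the SUSY sine-Gordon equation, with unit normal N = Ψ⁻¹·diag(−1,1,0)·Ψ and second fundamental form coefficients b_{11} = 0, b_{12} = (β/(2λ)) sin φ, b_{22} = 0, the Gaussian curvature K = (b_{11}b_{22} + b_{12}²)/(g_{11}g_{22} + g_{12}²) equals the constant 4λ²/β², independent of φ. -/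
noncomputable section

/-- Superfunctions f = f₀ + f₁θ¹ + f₂θ² + f₁₂θ¹θ² of two bosonic variables
(x₁,x₂) and two fermionic variables θ¹,θ², encoded by their 4 component
functions (c₀, c₁, c₂, c₁₂), indexed by 0,1,2,3. -/
def SF : Type := Fin 4 → ℝ × ℝ → ℂ

instance : AddCommGroup SF := inferInstanceAs (AddCommGroup (Fin 4 → ℝ × ℝ → ℂ))
instance : SMul ℂ SF := inferInstanceAs (SMul ℂ (Fin 4 → ℝ × ℝ → ℂ))

/-- multiplication of superfunctions (θ's anticommute and square to zero). -/
instance : Mul SF :=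
  ⟨fun f g => ![f 0 * g 0, f 0 * g 1 + f 1 * g 0, f 0 * g 2 + f 2 * g 0,
      f 0 * g 3 + f 3 * g 0 + f 1 * g 2 - f 2 * g 1]⟩

instance : One SF := ⟨![1, 0, 0, 0]⟩

/-- constant bosonic superfunction. -/
def C (z : ℂ) : SF := ![fun _ => z, 0, 0, 0]

/-- a superfunction is even (bosonic) iff its θ¹ and θ² components vanish. -/
def IsEven (f : SF) : Prop := f 1 = 0 ∧ f 2 = 0

/-- partial derivative ∂_{x_k} of a component function. -/
def pd (k : Fin 2) (h : ℝ × ℝ → ℂ) : ℝ × ℝ → ℂ :=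
  fun z => fderiv ℝ h z (if k = 0 then (1, 0) else (0, 1))

/-- The covariant derivatives D_j = ∂_{θ^j} − iθ^j ∂_{x_j} on components. -/
def D : Fin 2 → SF → SF := fun j f =>
  if j = 0 then
    ![f 1, fun z => -Complex.I * pd 0 (f 0) z, f 3, fun z => -Complex.I * pd 0 (f 2) z]
  else
    ![f 2, fun z => -(f 3 z), fun z => -Complex.I * pd 1 (f 0) z,
      fun z => Complex.I * pd 1 (f 1) z]

/-- exponential of a superfunction (the nilpotent part exponentiates finitely). -/
def expSF (f : SF) : SF :=
  ![fun z => Complex.exp (f 0 z), fun z => Complex.exp (f 0 z) * f 1 z,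
    fun z => Complex.exp (f 0 z) * f 2 z, fun z => Complex.exp (f 0 z) * f 3 z]

/-- sine of a superfunction, sin f = (e^{if} − e^{−if})/(2i). -/
def sinSF (f : SF) : SF :=
  C (1 / (2 * Complex.I)) * (expSF (C Complex.I * f) - expSF (-(C Complex.I * f)))

/-- cosine of a superfunction, cos f = (e^{if} + e^{−if})/2. -/
def cosSF (f : SF) : SF :=
  C (1 / 2) * (expSF (C Complex.I * f) + expSF (-(C Complex.I * f)))

/-!
Superfunctions form a (noncommutative) ℂ-algebra in which `e^{iφ}` and `e^{-iφ}` are mutually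
inverse, so `cos²φ + sin²φ = 1` for every superfunction `φ`. Since the constants
satisfy `g₁₂² = -g₁₁g₂₂ = -β⁴/(16λ⁴)`, this gives `g₁₁g₂₂ + g₁₂² = (β⁴/(16λ⁴)) sin²φ`, while
`b₁₁b₂₂ + b₁₂² = (β²/(4λ²)) sin²φ`; cancelling the left-invertible factor `sin²φ` leaves
`K = 4λ²/β²`.
-/

theorem eq_algebraMap_of_smul_mul_eq_smul {k R : Type*} [Field k] [Ring R] [Algebra k R]
    {s t K : R} (hts : t * s = 1) {m n : k} (hm : m ≠ 0) (h : m • (s * K) = n • s) :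
    K = algebraMap k R (n / m) := by
  have hK : m • K = n • 1 := by
    simpa only [mul_smul_comm, ← mul_assoc, hts, one_mul, mul_one] using congrArg (t * ·) h
  rw [Algebra.algebraMap_eq_smul_one, div_eq_inv_mul, mul_smul, ← hK, smul_smul,
    inv_mul_cancel₀ hm, one_smul]

namespace SF

@[ext]
lemma ext {f g : SF} (h0 : f 0 = g 0) (h1 : f 1 = g 1) (h2 : f 2 = g 2) (h3 : f 3 = g 3) :
    f = g :=
  funext fun i => by fin_cases i <;> assumption

@[simp] lemma add_apply (f g : SF) (i : Fin 4) : (f + g) i = f i + g i := rfl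
@[simp] lemma sub_apply (f g : SF) (i : Fin 4) : (f - g) i = f i - g i := rfl
@[simp] lemma neg_apply (f : SF) (i : Fin 4) : (-f) i = -f i := rfl
@[simp] lemma zero_apply (i : Fin 4) : (0 : SF) i = 0 := rfl
@[simp] lemma smul_apply (z : ℂ) (f : SF) (i : Fin 4) : (z • f) i = z • f i := rfl

@[simp] lemma mul_apply_zero (f g : SF) : (f * g) 0 = f 0 * g 0 := rfl
@[simp] lemma mul_apply_one (f g : SF) : (f * g) 1 = f 0 * g 1 + f 1 * g 0 := rfl
@[simp] lemma mul_apply_two (f g : SF) : (f * g) 2 = f 0 * g 2 + f 2 * g 0 := rfl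
@[simp] lemma mul_apply_three (f g : SF) :
    (f * g) 3 = f 0 * g 3 + f 3 * g 0 + f 1 * g 2 - f 2 * g 1 := rfl

@[simp] lemma one_apply_zero : (1 : SF) 0 = 1 := rfl
@[simp] lemma one_apply_one : (1 : SF) 1 = 0 := rfl
@[simp] lemma one_apply_two : (1 : SF) 2 = 0 := rfl
@[simp] lemma one_apply_three : (1 : SF) 3 = 0 := rfl

-- Scoped: a global instance would change the elaborated `*`, `0`, `1` of later statements.
scoped instance : Ring SF :=
  { (inferInstance : AddCommGroup SF) with
    mul_assoc := fun f g h => by ext <;> simp <;> ring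
    one_mul := fun f => by ext <;> simp
    mul_one := fun f => by ext <;> simp
    zero_mul := fun f => by ext <;> simp
    mul_zero := fun f => by ext <;> simp
    left_distrib := fun f g h => by ext <;> simp <;> ring
    right_distrib := fun f g h => by ext <;> simp <;> ring }

scoped instance : Module ℂ SF := inferInstanceAs (Module ℂ (Fin 4 → ℝ × ℝ → ℂ))

scoped instance : Algebra ℂ SF :=
  Algebra.ofModule (fun z f g => by ext <;> simp <;> ring)
    (fun z f g => by ext <;> simp <;> ring)

lemma C_eq_algebraMap (z : ℂ) : C z = algebraMap ℂ SF z := by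
  rw [Algebra.algebraMap_eq_smul_one]
  ext <;> simp [C]

lemma expSF_mul_expSF_neg (f : SF) : expSF f * expSF (-f) = 1 := by
  ext <;> simp <;> simp [expSF, ← Complex.exp_add] <;> ring

lemma cosSF_sq_add_sinSF_sq (f : SF) : cosSF f ^ 2 + sinSF f ^ 2 = 1 := by
  have hI : 1 / (2 * Complex.I) * (1 / (2 * Complex.I)) = -(1 / 2 * (1 / 2)) := by
    field_simp; simp
  have hEF := expSF_mul_expSF_neg (Complex.I • f)
  have hFE := neg_neg (Complex.I • f) ▸ expSF_mul_expSF_neg (-(Complex.I • f))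
  simp only [pow_two, cosSF, sinSF, C_eq_algebraMap, ← Algebra.smul_def, smul_mul_smul_comm, hI,
    neg_smul, ← sub_eq_add_neg, ← smul_sub]
  generalize expSF (Complex.I • f) = E, expSF (-(Complex.I • f)) = F at *
  have hsq : (E + F) * (E + F) - (E - F) * (E - F) = (2 * 2 : ℂ) • 1 := by
    calc (E + F) * (E + F) - (E - F) * (E - F) = (2 : ℂ) • (E * F + F * E) := by
          rw [two_smul]; noncomm_ring
      _ = (2 * 2 : ℂ) • 1 := by rw [hEF, hFE]; module
  rw [hsq, smul_smul]
  norm_num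

end SF

section

open SF Complex

lemma symTafel_firstFundamentalForm_det (lam β : ℂ) (φ : SF) :
    C (-I * β ^ 2 / (8 * lam ^ 3)) * C (I * β ^ 2 / (2 * lam))
      + (C (-I * β ^ 2 / (4 * lam ^ 2)) * cosSF φ) * (C (-I * β ^ 2 / (4 * lam ^ 2)) * cosSF φ)
      = (β ^ 4 / (16 * lam ^ 4)) • sinSF φ ^ 2 := by
  have hg₁₁g₂₂ :
      -I * β ^ 2 / (8 * lam ^ 3) * (I * β ^ 2 / (2 * lam)) = β ^ 4 / (16 * lam ^ 4) := by
    ring_nf; rw [I_sq]; ring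
  have hg₁₂ :
      -I * β ^ 2 / (4 * lam ^ 2) * (-I * β ^ 2 / (4 * lam ^ 2)) = -(β ^ 4 / (16 * lam ^ 4)) := by
    ring_nf; rw [I_sq]; ring
  simp only [C_eq_algebraMap, ← map_mul, ← Algebra.smul_def, smul_mul_smul_comm, hg₁₁g₂₂, hg₁₂]
  rw [← pow_two, eq_sub_of_add_eq (cosSF_sq_add_sinSF_sq φ), Algebra.algebraMap_eq_smul_one]
  module

lemma symTafel_secondFundamentalForm_det (lam β : ℂ) (φ : SF) :
    (0 : SF) * 0 + (C (β / (2 * lam)) * sinSF φ) * (C (β / (2 * lam)) * sinSF φ)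
      = (β ^ 2 / (4 * lam ^ 2)) • sinSF φ ^ 2 := by
  simp only [C_eq_algebraMap, ← Algebra.smul_def, smul_mul_smul_comm, mul_zero, zero_add, pow_two]
  ring_nf

end

theorem symTafel_gaussian_curvature_constant_general (lam β : ℂ) (hlam : lam ≠ 0) (hβ : β ≠ 0)
    (φ : SF)
    (hs : ∃ s : SF, sinSF φ * s = 1 ∧ s * sinSF φ = 1) (K : SF)
    (hK : (C (-Complex.I * β ^ 2 / (8 * lam ^ 3)) * C (Complex.I * β ^ 2 / (2 * lam))
          + (C (-Complex.I * β ^ 2 / (4 * lam ^ 2)) * cosSF φ)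
            * (C (-Complex.I * β ^ 2 / (4 * lam ^ 2)) * cosSF φ)) * K
        = (0 : SF) * (0 : SF)
          + (C (β / (2 * lam)) * sinSF φ) * (C (β / (2 * lam)) * sinSF φ)) :
    K = C (4 * lam ^ 2 / β ^ 2) := by
  obtain ⟨t, -, hts⟩ := hs
  open SF in
  rw [symTafel_firstFundamentalForm_det, symTafel_secondFundamentalForm_det, smul_mul_assoc] at hK
  have hdet : β ^ 4 / (16 * lam ^ 4) ≠ 0 := by simp [hβ, hlam]
  open SF in
  rw [eq_algebraMap_of_smul_mul_eq_smul (pow_mul_pow_eq_one 2 hts) hdet hK, C_eq_algebraMap]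
  congr 1
  field_simp
  norm_num

/-- for the Sym–Tafel immersion of the SUSY sine-Gordon equation,
with first fundamental form coefficients g₁₁ = −iβ²/(8λ³),
g₁₂ = −(iβ²/(4λ²))cos φ, g₂₂ = iβ²/(2λ) and second fundamental form
coefficients b₁₁ = 0, b₁₂ = (β/(2λ))sin φ, b₂₂ = 0, the Gaussian curvature
K = (b₁₁b₂₂ + b₁₂²)/(g₁₁g₂₂ + g₁₂²) equals the constant 4λ²/β², independent of
φ (assuming sin φ is invertible). -/
theorem symTafel_gaussian_curvature_constant (lam β : ℂ) (hlam : lam ≠ 0) (hβ : β ≠ 0)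
    (φ : SF) (hφ : IsEven φ)
    (hs : ∃ s : SF, sinSF φ * s = 1 ∧ s * sinSF φ = 1) (K : SF)
    (hK : (C (-Complex.I * β ^ 2 / (8 * lam ^ 3)) * C (Complex.I * β ^ 2 / (2 * lam))
          + (C (-Complex.I * β ^ 2 / (4 * lam ^ 2)) * cosSF φ)
            * (C (-Complex.I * β ^ 2 / (4 * lam ^ 2)) * cosSF φ)) * K
        = (0 : SF) * (0 : SF)
          + (C (β / (2 * lam)) * sinSF φ) * (C (β / (2 * lam)) * sinSF φ)) :
    K = C (4 * lam ^ 2 / β ^ 2) :=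
  symTafel_gaussian_curvature_constant_general lam β hlam hβ φ hs K hK
end
end
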